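/- arXiv:2302.08411 — 2 statements merged into one kernel-verified Lean document; each statement's English description precedes it below -/
import Mathlib

section
/- (Tweedie's formula / Miyasawa) Let X be a random vector on ℝ^d with density f_X, let Y = X + σN with N ~ N(0, Id) independent of X, and let f_Y = G_{0,σ²Id} * f_X be the (smooth, positive) density of Y. Then the conditional expectation satisfies E[X | Y = y] = y + σ² ∇ log f_Y(y). -/
open MeasureTheory Real

/-!
The Gaussian satisfies `∇G_σ(w) = -σ⁻² G_σ(w) w`, and both `G_σ` and `w ↦ G_σ(w) w` are bounded
(the latter by `(2πσ²)^(-d/2) σ`, from `1 + u ≤ exp u`). So `f_Y = G_σ * f_X` may be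
differentiated under the integral sign against the integrable `f_X`, giving
`σ² ∇f_Y(y) = ∫ G_σ(y - x) f_X(x) x dx - f_Y(y) y`, and `∇ log f_Y = f_Y⁻¹ ∇f_Y` as `f_Y > 0`.
-/

/-- The isotropic Gaussian density `G_{0,σ²Id}` on `ℝ^d`. -/
noncomputable def isoGauss (d : ℕ) (σ : ℝ) (x : EuclideanSpace ℝ (Fin d)) : ℝ :=
  (2 * Real.pi * σ ^ 2) ^ (-(d : ℝ) / 2) * Real.exp (-‖x‖ ^ 2 / (2 * σ ^ 2))

theorem HasGradientAt.log {E : Type*} [NormedAddCommGroup E] [InnerProductSpace ℝ E]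
    [CompleteSpace E] {f : E → ℝ} {f' x : E} (hf : HasGradientAt f f' x) (hx : f x ≠ 0) :
    HasGradientAt (fun y => Real.log (f y)) ((f x)⁻¹ • f') x := by
  rw [hasGradientAt_iff_hasFDerivAt] at hf ⊢
  simpa using hf.log hx

section Convolution

variable {E F : Type*} [NormedAddCommGroup E] [InnerProductSpace ℝ E] [FiniteDimensional ℝ E]
  [MeasurableSpace E] [BorelSpace E] [NormedAddCommGroup F] [NormedSpace ℝ F]
  {μ : Measure E} {f : E → ℝ}

theorem MeasureTheory.Integrable.smul_comp_sub {φ : E → F} {C : ℝ} (hf : Integrable f μ)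
    (hφ : Continuous φ) (hφC : ∀ w, ‖φ w‖ ≤ C) (y : E) :
    Integrable (fun x => f x • φ (y - x)) μ :=
  hf.smul_bdd C (hφ.comp (continuous_sub_left y)).aestronglyMeasurable
    (.of_forall fun x => hφC (y - x))

theorem hasGradientAt_integral_comp_sub_mul {G : E → ℝ} {G' : E → E} {B C : ℝ}
    (hG : ∀ w, HasGradientAt G (G' w) w) (hG' : Continuous G') (hGB : ∀ w, ‖G w‖ ≤ B)
    (hG'C : ∀ w, ‖G' w‖ ≤ C) (hf : Integrable f μ) (y : E) :
    HasGradientAt (fun z => ∫ x, G (z - x) * f x ∂μ) (∫ x, f x • G' (y - x) ∂μ) y := by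
  have hGc : Continuous G := continuous_iff_continuousAt.2 fun w => (hG w).continuousAt
  have hderiv (x z : E) : HasFDerivAt (fun z => G (z - x) * f x)
      (f x • InnerProductSpace.toDual ℝ E (G' (z - x))) z := by
    simpa using ((hG (z - x)).hasFDerivAt.comp z ((hasFDerivAt_id z).sub_const x)).mul_const (f x)
  have hF := hasFDerivAt_integral_of_dominated_of_fderiv_le
    (F := fun z x => G (z - x) * f x) (μ := μ) (x₀ := y) (bound := fun x => C * ‖f x‖)
    Filter.univ_mem
    (.of_forall fun z =>
      (hGc.comp (continuous_sub_left z)).aestronglyMeasurable.mul hf.aestronglyMeasurable)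
    (hf.bdd_mul (hGc.comp (continuous_sub_left y)).aestronglyMeasurable
      (.of_forall fun x => hGB (y - x)))
    (hf.aestronglyMeasurable.smul ((InnerProductSpace.toDual ℝ E).continuous.comp
      (hG'.comp (continuous_sub_left y))).aestronglyMeasurable)
    (.of_forall fun x z _ => by
      rw [norm_smul, LinearIsometryEquiv.norm_map, mul_comm]
      exact mul_le_mul_of_nonneg_right (hG'C _) (norm_nonneg _))
    (hf.norm.const_mul C) (.of_forall fun x z _ => hderiv x z)
  rw [hasGradientAt_iff_hasFDerivAt]
  refine hF.congr_fderiv ?_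
  -- over `ℝ`, `toDual` is `innerSL` up to defeq, and the latter is a continuous linear map
  change _ = innerSL ℝ (∫ x, f x • G' (y - x) ∂μ)
  rw [← (innerSL ℝ).integral_comp_comm (hf.smul_comp_sub hG' hG'C y)]
  simp only [map_smul]
  rfl

end Convolution

theorem mul_exp_neg_sq_div_le {σ : ℝ} (hσ : 0 < σ) (t : ℝ) :
    t * exp (-t ^ 2 / (2 * σ ^ 2)) ≤ σ := by
  rw [neg_div, exp_neg, ← div_eq_mul_inv, div_le_iff₀ (exp_pos _)]
  calc t ≤ σ * (t ^ 2 / (2 * σ ^ 2) + 1) := by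
        rw [mul_add, mul_one, ← sub_nonneg]
        have : σ * (t ^ 2 / (2 * σ ^ 2)) + σ - t = ((t - σ) ^ 2 + σ ^ 2) / (2 * σ) := by
          field_simp; ring
        rw [this]; positivity
    _ ≤ σ * exp (t ^ 2 / (2 * σ ^ 2)) :=
        mul_le_mul_of_nonneg_left (add_one_le_exp _) hσ.le

namespace isoGauss

variable {d : ℕ} {σ : ℝ}

theorem nonneg (w : EuclideanSpace ℝ (Fin d)) : 0 ≤ isoGauss d σ w := by
  unfold isoGauss; positivity

theorem norm_le (w : EuclideanSpace ℝ (Fin d)) :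
    ‖isoGauss d σ w‖ ≤ (2 * π * σ ^ 2) ^ (-(d : ℝ) / 2) := by
  rw [Real.norm_of_nonneg (nonneg w)]
  exact mul_le_of_le_one_right (by positivity) <| exp_le_one_iff.2 <|
    div_nonpos_of_nonpos_of_nonneg (neg_nonpos.2 (sq_nonneg _)) (by positivity)

theorem norm_smul_le (hσ : 0 < σ) (w : EuclideanSpace ℝ (Fin d)) :
    ‖isoGauss d σ w • w‖ ≤ (2 * π * σ ^ 2) ^ (-(d : ℝ) / 2) * σ := by
  rw [norm_smul, Real.norm_of_nonneg (nonneg w), isoGauss, mul_assoc, mul_comm (exp _)]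
  exact mul_le_mul_of_nonneg_left (mul_exp_neg_sq_div_le hσ ‖w‖) (by positivity)

theorem continuous : Continuous (isoGauss d σ) := by
  unfold isoGauss; fun_prop

theorem hasGradientAt (w : EuclideanSpace ℝ (Fin d)) :
    HasGradientAt (isoGauss d σ) ((-(σ ^ 2)⁻¹ * isoGauss d σ w) • w) w := by
  have hexp := (hasDerivAt_exp _).comp_hasFDerivAt w
    ((hasFDerivAt_id w).norm_sq.const_mul (-(2 * σ ^ 2)⁻¹))
  have hfun : isoGauss d σ =
      fun w => (2 * π * σ ^ 2) ^ (-(d : ℝ) / 2) * exp (-(2 * σ ^ 2)⁻¹ * ‖w‖ ^ 2) := by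
    ext w; rw [isoGauss]; congr 2; ring
  rw [hasGradientAt_iff_hasFDerivAt, hfun]
  refine (hexp.const_mul _).congr_fderiv ?_
  ext v
  simp only [mul_inv_rev, id_eq, neg_mul, ContinuousLinearMap.comp_id, neg_smul, smul_neg,
    neg_apply, smul_apply, coe_innerSL_apply, nsmul_eq_mul,
    Nat.cast_ofNat, smul_eq_mul, map_neg, map_smul, InnerProductSpace.toDual_apply_apply, neg_inj]
  ring

theorem hasGradientAt_integral_sub_mul (hσ : 0 < σ)
    {μ : Measure (EuclideanSpace ℝ (Fin d))} {f : EuclideanSpace ℝ (Fin d) → ℝ}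
    (hf : Integrable f μ) (y : EuclideanSpace ℝ (Fin d)) :
    HasGradientAt (fun z => ∫ x, isoGauss d σ (z - x) * f x ∂μ)
      (-(σ ^ 2)⁻¹ • ((∫ x, isoGauss d σ (y - x) * f x ∂μ) • y
        - ∫ x, (isoGauss d σ (y - x) * f x) • x ∂μ)) y := by
  set c := (2 * π * σ ^ 2) ^ (-(d : ℝ) / 2)
  have hgrad := hasGradientAt_integral_comp_sub_mul hasGradientAt
    ((continuous_const.mul continuous).smul continuous_id)
    (B := c) (C := (σ ^ 2)⁻¹ * (c * σ))
    norm_le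
    (fun w => by
      rw [mul_smul, norm_smul, norm_neg, norm_inv, norm_pow, Real.norm_of_nonneg hσ.le]
      exact mul_le_mul_of_nonneg_left (norm_smul_le hσ w) (by positivity))
    hf y
  convert hgrad using 1
  have hGy : Integrable (fun x => (isoGauss d σ (y - x) * f x) • y) μ :=
    (hf.bdd_mul (continuous.comp (continuous_sub_left y)).aestronglyMeasurable
      (.of_forall fun x => norm_le (y - x))).smul_const y
  have hGsub : Integrable (fun x => f x • (isoGauss d σ (y - x) • (y - x))) μ :=
    hf.smul_comp_sub (continuous.smul continuous_id) (norm_smul_le hσ) y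
  have hGx : Integrable (fun x => (isoGauss d σ (y - x) * f x) • x) μ :=
    (hGy.sub hGsub).congr (.of_forall fun x => by simp only [Pi.sub_apply]; module)
  rw [← integral_smul_const, ← integral_sub hGy hGx, ← integral_smul]
  congr 1
  funext x
  module

end isoGauss

theorem tweedie_formula_general (d : ℕ) (σ : ℝ) (hσ : 0 < σ)
    (fX : EuclideanSpace ℝ (Fin d) → ℝ)
    (hprob : ∫ x, fX x = 1)
    (fY : EuclideanSpace ℝ (Fin d) → ℝ)
    (hfY : ∀ y, fY y = ∫ x, isoGauss d σ (y - x) * fX x)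
    (hpos : ∀ y, 0 < fY y) :
    ∀ y : EuclideanSpace ℝ (Fin d),
      (fY y)⁻¹ • (∫ x, (isoGauss d σ (y - x) * fX x) • x)
        = y + σ ^ 2 • gradient (fun z => Real.log (fY z)) y := by
  intro y
  have hgrad := isoGauss.hasGradientAt_integral_sub_mul hσ (integrable_of_integral_eq_one hprob) y
  rw [← funext hfY, ← hfY y] at hgrad
  rw [(hgrad.log (hpos y).ne').gradient]
  have hfy : fY y ≠ 0 := (hpos y).ne'
  have hcoef : σ ^ 2 * (fY y)⁻¹ * -(σ ^ 2)⁻¹ = -(fY y)⁻¹ := by field_simp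
  rw [smul_smul, smul_smul, hcoef, neg_smul, smul_sub, smul_smul, inv_mul_cancel₀ hfy, one_smul]
  abel

/-- (Tweedie's formula / Miyasawa) If `Y = X + σN` with `N ~ N(0,Id)` independent of `X`,
and `f_Y = G_{0,σ²Id} * f_X` is the (positive) density of `Y`, then the Bayesian least-squares
estimator satisfies `E[X | Y = y] = y + σ² ∇ log f_Y(y)`. -/
theorem tweedie_formula (d : ℕ) (σ : ℝ) (hσ : 0 < σ)
    (fX : EuclideanSpace ℝ (Fin d) → ℝ) (hmeas : Measurable fX)
    (hnonneg : ∀ x, 0 ≤ fX x) (hprob : ∫ x, fX x = 1)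
    (fY : EuclideanSpace ℝ (Fin d) → ℝ)
    (hfY : ∀ y, fY y = ∫ x, isoGauss d σ (y - x) * fX x)
    (hpos : ∀ y, 0 < fY y) :
    ∀ y : EuclideanSpace ℝ (Fin d),
      (fY y)⁻¹ • (∫ x, (isoGauss d σ (y - x) * fX x) • x)
        = y + σ ^ 2 • gradient (fun z => Real.log (fY z)) y :=
  tweedie_formula_general d σ hσ fX hprob fY hfY hpos
end

section
/- (Fixed points of the alternating scheme are critical) Let K̃ ∈ ℝ^{n×n}, and suppose (U, Σ) is a fixed point of the alternating minimization: Σ = diag-part of UᵀK̃ (i.e. Σ_{i,i} = (UᵀK̃)_{i,i}) and U = U^Σ (V^Σ)ᵀ where K̃Σ = U^Σ D (V^Σ)ᵀ is an SVD. Then for every M tangent to SO(n) at U (i.e. MᵀU + UᵀM = 0), one has ⟨∇f(U), M⟩_F = 0, where f(U) = −Σ_i (UᵀK̃)_{i,i}²; that is, U is a critical point of f on SO(n). -/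
/-!
At a fixed point the SVD gives a polar decomposition `K̃Σ = U A` with `A = V^Σ D (V^Σ)ᵀ`
symmetric. For a tangent vector `M` the matrix `B = UᵀM` is skew, so
`⟨K̃Σ, M⟩_F = tr((UA)ᵀM) = tr(A B) = 0`, a symmetric matrix being Frobenius-orthogonal to every
skew one.
-/

open Matrix

namespace Matrix

variable {n R : Type*} [Fintype n] [CommRing R]

theorem IsSymm.mul_mul_transpose {A : Matrix n n R} (hA : A.IsSymm) (B : Matrix n n R) :
    (B * A * Bᵀ).IsSymm := by
  simp only [IsSymm, transpose_mul, transpose_transpose, hA.eq, Matrix.mul_assoc]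

theorem trace_mul_eq_zero_of_isSymm_of_transpose_eq_neg [IsAddTorsionFree R]
    {A B : Matrix n n R} (hA : A.IsSymm) (hB : Bᵀ = -B) : (A * B).trace = 0 := by
  refine self_eq_neg.mp ?_
  calc (A * B).trace = (A * B)ᵀ.trace := (trace_transpose _).symm
    _ = -(A * B).trace := by
      rw [transpose_mul, hB, hA.eq, Matrix.neg_mul, trace_neg, trace_mul_comm]

theorem transpose_mul_eq_neg_of_tangent {U M : Matrix n n R} (hM : Mᵀ * U + Uᵀ * M = 0) :
    (Uᵀ * M)ᵀ = -(Uᵀ * M) := by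
  rw [transpose_mul, transpose_transpose, ← add_eq_zero_iff_eq_neg, hM]

theorem trace_transpose_mul_eq_zero_of_tangent [IsAddTorsionFree R]
    {U A M : Matrix n n R} (hA : A.IsSymm) (hM : Mᵀ * U + Uᵀ * M = 0) :
    ((U * A)ᵀ * M).trace = 0 := by
  rw [transpose_mul, hA.eq, Matrix.mul_assoc]
  exact trace_mul_eq_zero_of_isSymm_of_transpose_eq_neg hA (transpose_mul_eq_neg_of_tangent hM)

theorem mul_mul_transpose_eq_polar [DecidableEq n] {P D V : Matrix n n R} (hV : Vᵀ * V = 1) :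
    P * D * Vᵀ = (P * Vᵀ) * (V * D * Vᵀ) := by
  simp only [Matrix.mul_assoc, ← Matrix.mul_assoc Vᵀ V, hV, Matrix.one_mul]

end Matrix

theorem fixed_point_is_critical_general (n : ℕ)
    (Kt U : Matrix (Fin n) (Fin n) ℝ)
    (S : Matrix (Fin n) (Fin n) ℝ)
    (US VS D : Matrix (Fin n) (Fin n) ℝ)
    (hVS : VSᵀ * VS = 1)
    (hDdiag : ∀ i j, i ≠ j → D i j = 0)
    (hSVD : Kt * S = US * D * VSᵀ)
    (hfix : U = US * VSᵀ) :
    ∀ M : Matrix (Fin n) (Fin n) ℝ, Mᵀ * U + Uᵀ * M = 0 →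
      ((((-2 : ℝ) • (Kt * S))ᵀ) * M).trace = 0 := by
  intro M hM
  have hpolar : Kt * S = U * (VS * D * VSᵀ) := by
    rw [hSVD, hfix, mul_mul_transpose_eq_polar hVS]
  have hsymm : (VS * D * VSᵀ).IsSymm :=
    (IsDiag.isSymm fun i j hij => hDdiag i j hij).mul_mul_transpose VS
  rw [transpose_smul, Matrix.smul_mul, trace_smul, hpolar,
    trace_transpose_mul_eq_zero_of_tangent hsymm hM, smul_zero]

/-- (Fixed points of the alternating scheme are critical) If `(U, Σ)` is a fixed point of the
alternating minimization, i.e. `Σ = diag((UᵀK̃)_{ii})` and `U = U^Σ (V^Σ)ᵀ` for an SVD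
`K̃Σ = U^Σ D (V^Σ)ᵀ`, then `⟨∇f(U), M⟩_F = 0` for every tangent vector `M` to `SO(n)` at `U`,
where `∇f(U) = −2 K̃ Σ` is the gradient of `f(U) = −Σ_i (UᵀK̃)_{ii}²`. -/
theorem fixed_point_is_critical (n : ℕ)
    (Kt U : Matrix (Fin n) (Fin n) ℝ)
    (hUorth : Uᵀ * U = 1) (hUdet : U.det = 1)
    (S : Matrix (Fin n) (Fin n) ℝ)
    (hS : S = Matrix.diagonal fun i => (Uᵀ * Kt) i i)
    (US VS D : Matrix (Fin n) (Fin n) ℝ)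
    (hUS : USᵀ * US = 1) (hVS : VSᵀ * VS = 1)
    (hDdiag : ∀ i j, i ≠ j → D i j = 0) (hDnn : ∀ i, 0 ≤ D i i)
    (hSVD : Kt * S = US * D * VSᵀ)
    (hfix : U = US * VSᵀ) :
    ∀ M : Matrix (Fin n) (Fin n) ℝ, Mᵀ * U + Uᵀ * M = 0 →
      ((((-2 : ℝ) • (Kt * S))ᵀ) * M).trace = 0 :=
  fixed_point_is_critical_general n Kt U S US VS D hVS hDdiag hSVD hfix
end
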